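/- Let 0 < μ < 1 and define q(c) = ((1−μ)/2)·h((c+1)/(1−μ)) and r(c) = ((1+μ)/2)·h((c+1)/(1+μ)) for c ∈ [−1, −μ], where h is binary entropy. Then q(c) < r(c) for all c ∈ (−1, −μ]. -/

import Mathlib

/-!
Writing `s · h(t / s) = η(t) + η(s - t) - η(s)` with `η x = -x log x`, the quantity
`s · h(t / s)` is strictly increasing in `s ≥ t` for fixed `t > 0`, because the increment
`η(s) - η(s - t)` of the strictly concave function `η` over a window of width `t` strictly
decreases as the window moves right. Take `t = c + 1` and `s = 1 ∓ μ`.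
-/

/-- Binary entropy in bits (with `h 0 = h 1 = 0` since `logb 2 0 = 0`). -/
noncomputable def binEnt (p : ℝ) : ℝ := -(p * Real.logb 2 p) - (1 - p) * Real.logb 2 (1 - p)

open Real Set

theorem StrictConcaveOn.sub_sub_lt_sub_sub {𝕜 : Type*} [Field 𝕜] [LinearOrder 𝕜]
    [IsStrictOrderedRing 𝕜] {S : Set 𝕜} {f : 𝕜 → 𝕜} (hf : StrictConcaveOn 𝕜 S f) {t x y : 𝕜}
    (ht : 0 < t) (hxt : x - t ∈ S) (hy : y ∈ S) (hxy : x < y) :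
    f y - f (y - t) < f x - f (x - t) := by
  have hx : x ∈ S := hf.1.ordConnected.out hxt hy ⟨by linarith, hxy.le⟩
  have hyt : y - t ∈ S := hf.1.ordConnected.out hxt hy ⟨by linarith, by linarith⟩
  -- slope on `[x - t, x]` > slope on `[x - t, y]` > slope on `[y - t, y]`
  have h₁ := hf.secant_strict_mono hxt hx hy (by linarith) (by linarith) hxy
  have h₂ := hf.secant_strict_mono hy hxt hyt (by linarith) (by linarith) (by linarith)
  rw [sub_sub_cancel] at h₁
  rw [sub_sub_cancel_left, ← neg_div_neg_eq, ← neg_div_neg_eq (f (x - t) - f y)] at h₂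
  simp only [neg_sub, neg_neg] at h₂
  exact (div_lt_div_iff_of_pos_right ht).1 (h₂.trans h₁)

theorem mul_binEntropy_div {s : ℝ} (hs : s ≠ 0) (t : ℝ) :
    s * binEntropy (t / s) = negMulLog t + negMulLog (s - t) - negMulLog s := by
  have ht := negMulLog_mul (t / s) s
  have hst := negMulLog_mul ((s - t) / s) s
  rw [div_mul_cancel₀ _ hs] at ht hst
  rw [binEntropy_eq_negMulLog_add_negMulLog_one_sub, one_sub_div hs]
  have hsum : t / s + (s - t) / s = 1 := by rw [← add_div, add_sub_cancel, div_self hs]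
  linear_combination -ht - hst - negMulLog s * hsum

theorem strictMonoOn_mul_binEntropy_div {t : ℝ} (ht : 0 < t) :
    StrictMonoOn (fun s ↦ s * binEntropy (t / s)) (Ici t) := by
  intro x hx y hy hxy
  have hx0 : x ≠ 0 := (ht.trans_le hx).ne'
  have hy0 : y ≠ 0 := (ht.trans_le hy).ne'
  simp only [mul_binEntropy_div hx0, mul_binEntropy_div hy0]
  have := strictConcaveOn_negMulLog.sub_sub_lt_sub_sub ht (mem_Ici.2 (sub_nonneg.2 hx))
    (mem_Ici.2 (ht.le.trans hy)) hxy
  linarith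

theorem binEnt_eq_binEntropy_div_log_two (p : ℝ) : binEnt p = binEntropy p / log 2 := by
  rw [binEntropy_eq_negMulLog_add_negMulLog_one_sub]
  simp only [binEnt, negMulLog, logb]
  ring

theorem lemma_q_lt_r_general (μ : ℝ) (hμ0 : 0 < μ) :
    ∀ c ∈ Set.Ioc (-1 : ℝ) (-μ),
      ((1 - μ) / 2) * binEnt ((c + 1) / (1 - μ)) <
        ((1 + μ) / 2) * binEnt ((c + 1) / (1 + μ)) := by
  rintro c ⟨hc₁, hc₂⟩
  have key := strictMonoOn_mul_binEntropy_div (t := c + 1) (by linarith)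
    (mem_Ici.2 (by linarith : c + 1 ≤ 1 - μ)) (mem_Ici.2 (by linarith : c + 1 ≤ 1 + μ))
    (by linarith)
  simp only [binEnt_eq_binEntropy_div_log_two]
  calc (1 - μ) / 2 * (binEntropy ((c + 1) / (1 - μ)) / log 2)
      = (1 - μ) * binEntropy ((c + 1) / (1 - μ)) / (2 * log 2) := by ring
    _ < (1 + μ) * binEntropy ((c + 1) / (1 + μ)) / (2 * log 2) := (div_lt_div_iff_of_pos_right (by positivity)).2 key
    _ = (1 + μ) / 2 * (binEntropy ((c + 1) / (1 + μ)) / log 2) := by ring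

/-- Lemma 1 of the paper: for `-1 < c ≤ -μ`,
`q(c) = ((1-μ)/2)·h((c+1)/(1-μ)) < ((1+μ)/2)·h((c+1)/(1+μ)) = r(c)`. -/
theorem lemma_q_lt_r (μ : ℝ) (hμ0 : 0 < μ) (hμ1 : μ < 1) :
    ∀ c ∈ Set.Ioc (-1 : ℝ) (-μ),
      ((1 - μ) / 2) * binEnt ((c + 1) / (1 - μ)) <
        ((1 + μ) / 2) * binEnt ((c + 1) / (1 + μ)) :=
  lemma_q_lt_r_general μ hμ0
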